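/- arXiv:2012.01360 — 3 statements merged into one kernel-verified Lean document; each statement's English description precedes it below -/
import Mathlib

section
/- Let m ≥ 0 be an integer. A monomial ideal I of ℂ[x_0,x_1] is saturated and has Hilbert polynomial the constant polynomial m if and only if I = (x_0^a x_1^b) for some nonnegative integers a, b with a + b = m. -/
open MvPolynomial

/-- The Hilbert function of an ideal `I ⊆ ℂ[x_0,…,x_{n-1}]`: the dimension over `ℂ` of the
degree-`d` graded piece of the quotient ring. -/
noncomputable def hilbertFn (n : ℕ) (I : Ideal (MvPolynomial (Fin n) ℂ)) (d : ℕ) : ℕ :=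
  Module.finrank ℂ
    ((homogeneousSubmodule (Fin n) ℂ d) ⧸
      (Submodule.comap (homogeneousSubmodule (Fin n) ℂ d).subtype
        (Submodule.restrictScalars ℂ I)))

section Aux

lemma fin2_eq (u : Fin 2 →₀ ℕ) : u = Finsupp.single 0 (u 0) + Finsupp.single 1 (u 1) := by
  ext i
  fin_cases i <;> simp [Finsupp.single_apply]

lemma deg2 (u : Fin 2 →₀ ℕ) : u.degree = u 0 + u 1 := by
  have h : u.degree = ∑ i : Fin 2, u i :=
    Finset.sum_subset (Finset.subset_univ _) (fun i _ hi => Finsupp.notMem_support_iff.mp hi)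
  rw [h, Fin.sum_univ_two]

lemma le2 {u v : Fin 2 →₀ ℕ} : u ≤ v ↔ u 0 ≤ v 0 ∧ u 1 ≤ v 1 := by
  constructor
  · intro h; exact ⟨h 0, h 1⟩
  · rintro ⟨h0, h1⟩ i; fin_cases i <;> assumption

lemma pair0 (a b : ℕ) :
    ((Finsupp.single (0 : Fin 2) a + Finsupp.single 1 b) : Fin 2 →₀ ℕ) 0 = a := by
  simp [Finsupp.single_apply]

lemma pair1 (a b : ℕ) :
    ((Finsupp.single (0 : Fin 2) a + Finsupp.single 1 b) : Fin 2 →₀ ℕ) 1 = b := by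
  simp [Finsupp.single_apply]

lemma pair_add_pair (x y z w : ℕ) :
    ((Finsupp.single (0:Fin 2) x + Finsupp.single 1 y)
      + (Finsupp.single (0:Fin 2) z + Finsupp.single 1 w) : Fin 2 →₀ ℕ)
      = Finsupp.single (0:Fin 2) (x+z) + Finsupp.single 1 (y+w) := by
  ext i
  fin_cases i <;> simp [Finsupp.single_apply]

lemma single0_add_pair (i j : ℕ) :
    (Finsupp.single (0:Fin 2) 1 + (Finsupp.single (0:Fin 2) i + Finsupp.single 1 j) : Fin 2 →₀ ℕ)
      = Finsupp.single (0:Fin 2) (i+1) + Finsupp.single 1 j := by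
  ext t
  fin_cases t <;> simp [Finsupp.single_apply] <;> omega

lemma single1_add_pair (i j : ℕ) :
    (Finsupp.single (1:Fin 2) 1 + (Finsupp.single (0:Fin 2) i + Finsupp.single 1 j) : Fin 2 →₀ ℕ)
      = Finsupp.single (0:Fin 2) i + Finsupp.single 1 (j+1) := by
  ext t
  fin_cases t <;> simp [Finsupp.single_apply] <;> omega

lemma hilbertFn_eq_of (I : Ideal (MvPolynomial (Fin 2) ℂ)) (d k : ℕ)
    (e : Fin k → (Fin 2 →₀ ℕ))
    (hdeg : ∀ i, (e i).degree = d)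
    (hinj : Function.Injective e)
    (hmem : ∀ f : MvPolynomial (Fin 2) ℂ, f.IsHomogeneous d →
      (f ∈ I ↔ ∀ i, coeff (e i) f = 0)) :
    hilbertFn 2 I d = k := by
  classical
  let φ : (homogeneousSubmodule (Fin 2) ℂ d) →ₗ[ℂ] (Fin k → ℂ) :=
    LinearMap.pi (fun i => (lcoeff ℂ (e i)).comp (Submodule.subtype _))
  have hker : Submodule.comap (homogeneousSubmodule (Fin 2) ℂ d).subtype
      (Submodule.restrictScalars ℂ I) = LinearMap.ker φ := by
    ext f
    have hf : (f : MvPolynomial (Fin 2) ℂ).IsHomogeneous d :=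
      (mem_homogeneousSubmodule d _).mp f.2
    simp only [Submodule.mem_comap, Submodule.restrictScalars_mem, LinearMap.mem_ker,
      Submodule.coe_subtype]
    rw [hmem _ hf]
    constructor
    · intro h; funext i; exact h i
    · intro h i; exact congrFun h i
  have hsurj : Function.Surjective φ := by
    intro v
    refine ⟨⟨∑ i, monomial (e i) (v i), ?_⟩, ?_⟩
    · exact Submodule.sum_mem _ (fun i _ =>
        (mem_homogeneousSubmodule d _).mpr (isHomogeneous_monomial (v i) (hdeg i)))
    · funext j
      show coeff (e j) (∑ i, monomial (e i) (v i)) = v j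
      rw [coeff_sum]
      rw [Finset.sum_eq_single j]
      · simp
      · intro i _ hij
        rw [coeff_monomial, if_neg (fun h => hij (hinj h))]
      · intro h; exact absurd (Finset.mem_univ j) h
  unfold hilbertFn
  rw [hker]
  rw [(φ.quotKerEquivOfSurjective hsurj).finrank_eq]
  exact Module.finrank_fin_fun ℂ

lemma hilbert_bot (d : ℕ) : hilbertFn 2 ⊥ d = d + 1 := by
  apply hilbertFn_eq_of _ _ _
    (fun i : Fin (d+1) => Finsupp.single 0 i.val + Finsupp.single 1 (d - i.val))
  · intro i
    rw [deg2, pair0, pair1]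
    omega
  · intro i j h
    have h0 := congrArg (fun u : Fin 2 →₀ ℕ => u 0) h
    simp only [pair0] at h0
    exact Fin.ext h0
  · intro f hf
    simp only [Ideal.mem_bot]
    constructor
    · rintro rfl i; simp
    · intro h
      ext u
      rw [coeff_zero]
      by_cases hud : u.degree = d
      · rw [deg2] at hud
        have hu0 : u 0 < d + 1 := by omega
        have := h ⟨u 0, hu0⟩
        have heu : (Finsupp.single (0:Fin 2) (u 0) + Finsupp.single 1 (d - u 0)) = u := by
          have h1 : d - u 0 = u 1 := by omega
          rw [h1]; exact (fin2_eq u).symm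
        rwa [heu] at this
      · exact hf.coeff_eq_zero hud

lemma mem_principal (a b : ℕ) (f : MvPolynomial (Fin 2) ℂ) :
    f ∈ Ideal.span {monomial (Finsupp.single (0 : Fin 2) a + Finsupp.single 1 b) (1 : ℂ)} ↔
      ∀ u ∈ f.support, a ≤ u 0 ∧ b ≤ u 1 := by
  set c : Fin 2 →₀ ℕ := Finsupp.single (0 : Fin 2) a + Finsupp.single 1 b with hc
  rw [show ({monomial c (1:ℂ)} : Set _) = (fun u => monomial u (1:ℂ)) '' {c} by
      rw [Set.image_singleton]]
  rw [mem_ideal_span_monomial_image]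
  apply forall₂_congr
  intro u hu
  constructor
  · rintro ⟨s, hs, hle⟩
    rw [Set.mem_singleton_iff] at hs; subst hs
    rw [le2, hc, pair0, pair1] at hle
    exact hle
  · intro h
    exact ⟨c, rfl, le2.mpr (by rw [hc, pair0, pair1]; exact h)⟩

lemma hilbert_principal (a b d : ℕ) (hd : a + b ≤ d) :
    hilbertFn 2
      (Ideal.span {monomial (Finsupp.single (0 : Fin 2) a + Finsupp.single 1 b) (1 : ℂ)}) d
      = a + b := by
  classical
  set g : ℕ → ℕ := fun i => if i < a then i else d - b + 1 + (i - a) with hg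
  apply hilbertFn_eq_of _ _ _
    (fun i : Fin (a+b) => Finsupp.single 0 (g i.val) + Finsupp.single 1 (d - g i.val))
  · intro i
    have hi := i.isLt
    rw [deg2, pair0, pair1]
    simp only [hg]
    split <;> omega
  · intro i j h
    have h0 := congrArg (fun u : Fin 2 →₀ ℕ => u 0) h
    simp only [pair0] at h0
    have hi := i.isLt; have hj := j.isLt
    apply Fin.ext
    simp only [hg] at h0
    split at h0 <;> split at h0 <;> omega
  · intro f hf
    rw [mem_principal]
    constructor
    · intro h i
      by_contra hne
      have hu : (Finsupp.single (0:Fin 2) (g i.val) + Finsupp.single 1 (d - g i.val)) ∈ f.support :=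
        mem_support_iff.mpr hne
      have := h _ hu
      rw [pair0, pair1] at this
      have hi := i.isLt
      simp only [hg] at this
      split at this <;> omega
    · intro h u hu
      have hud : u.degree = d := by
        by_contra hud
        exact (mem_support_iff.mp hu) (hf.coeff_eq_zero hud)
      rw [deg2] at hud
      by_contra hne
      push_neg at hne
      have hex : ∃ i : ℕ, i < a + b ∧ g i = u 0 := by
        by_cases h0 : u 0 < a
        · exact ⟨u 0, by omega, by simp only [hg]; rw [if_pos h0]⟩
        · refine ⟨a + (u 0 - (d - b + 1)), by omega, ?_⟩
          simp only [hg]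
          rw [if_neg (by omega)]
          omega
      obtain ⟨i, hilt, hgi⟩ := hex
      have := h ⟨i, hilt⟩
      have heu : (Finsupp.single (0:Fin 2) (g i) + Finsupp.single 1 (d - g i)) = u := by
        have h1 : d - g i = u 1 := by omega
        rw [h1, hgi]; exact (fin2_eq u).symm
      rw [heu] at this
      exact (mem_support_iff.mp hu) this

end Aux

/-- A monomial ideal: an ideal generated by monomials. -/
def IsMonomialIdeal {n : ℕ} (I : Ideal (MvPolynomial (Fin n) ℂ)) : Prop :=
  ∃ S : Set (Fin n →₀ ℕ), I = Ideal.span ((fun a => monomial a (1 : ℂ)) '' S)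

/-- A homogeneous ideal `I` is saturated if for every homogeneous `f`, whenever `x_i * f ∈ I`
for all variables `x_i`, one has `f ∈ I`. -/
def IsSaturatedIdeal {n : ℕ} (I : Ideal (MvPolynomial (Fin n) ℂ)) : Prop :=
  ∀ f : MvPolynomial (Fin n) ℂ, (∃ d, f.IsHomogeneous d) →
    (∀ i : Fin n, X i * f ∈ I) → f ∈ I

/-- `I` has Hilbert polynomial `p` if its Hilbert function agrees with `p` for all
sufficiently large degrees. -/
def HasHilbertPoly {n : ℕ} (I : Ideal (MvPolynomial (Fin n) ℂ)) (p : Polynomial ℚ) : Prop :=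
  ∃ N : ℕ, ∀ d : ℕ, N ≤ d → (hilbertFn n I d : ℚ) = p.eval (d : ℚ)

/-- `I`'s Hilbert function eventually agrees with the function `p`. -/
def HasHilbertFun {n : ℕ} (I : Ideal (MvPolynomial (Fin n) ℂ)) (p : ℕ → ℕ) : Prop :=
  ∃ N : ℕ, ∀ d : ℕ, N ≤ d → hilbertFn n I d = p d

/-- The value at `d` of the Hilbert polynomial `p_λ` attached to a partition
`λ = (λ_1, …, λ_r)` (given as a list): `p_λ(d) = Σ_{i=1}^r C(d + λ_i − i, λ_i − 1)`.
(For `d ≥ r` the truncated subtraction agrees with the true polynomial value.) -/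
def partitionPoly (L : List ℕ) (d : ℕ) : ℕ :=
  ∑ i : Fin L.length, Nat.choose (d + L.get i - (i.val + 1)) (L.get i - 1)

/-- A `k`-orthant in `ℤ_{≥0}^m`: the set of lattice points with `m − k` coordinates fixed. -/
def IsOrthant (m k : ℕ) (K : Set (Fin m →₀ ℕ)) : Prop :=
  ∃ (S : Finset (Fin m)) (c : Fin m → ℕ), S.card = m - k ∧
    K = {a : Fin m →₀ ℕ | ∀ i ∈ S, a i = c i}

attribute [local instance] MvPolynomial.gradedAlgebra

/-- A homogeneous ideal. -/
def IsHomogeneousIdeal {n : ℕ} (I : Ideal (MvPolynomial (Fin n) ℂ)) : Prop :=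
  Ideal.IsHomogeneous (homogeneousSubmodule (Fin n) ℂ) I

lemma sat_principal (a b : ℕ) :
    IsSaturatedIdeal
      (Ideal.span {monomial (Finsupp.single (0 : Fin 2) a + Finsupp.single 1 b) (1 : ℂ)}) := by
  intro f _ hXf
  rw [mem_principal]
  intro u hu
  have h0 := hXf 0; have h1 := hXf 1
  rw [mem_principal] at h0 h1
  have hu0 : Finsupp.single (0:Fin 2) 1 + u ∈ (X 0 * f).support := by
    rw [mem_support_iff, coeff_X_mul]; exact mem_support_iff.mp hu
  have hu1 : Finsupp.single (1:Fin 2) 1 + u ∈ (X 1 * f).support := by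
    rw [mem_support_iff, coeff_X_mul]; exact mem_support_iff.mp hu
  have ha := h0 _ hu0
  have hb := h1 _ hu1
  simp only [Finsupp.add_apply, Finsupp.single_apply] at ha hb
  norm_num at ha hb
  exact ⟨hb.1, ha.2⟩

/-- A monomial ideal `I ⊆ ℂ[x_0,x_1]` is saturated with Hilbert polynomial the
constant polynomial `m` iff `I = (x_0^a x_1^b)` with `a + b = m`. -/
theorem statement2 (m : ℕ) (I : Ideal (MvPolynomial (Fin 2) ℂ)) (hmon : IsMonomialIdeal I) :
    (IsSaturatedIdeal I ∧ HasHilbertPoly I (Polynomial.C (m : ℚ))) ↔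
      ∃ a b : ℕ, a + b = m ∧
        I = Ideal.span {monomial (Finsupp.single (0 : Fin 2) a + Finsupp.single 1 b) (1 : ℂ)} := by
  constructor
  · rintro ⟨hsat, hhp⟩
    obtain ⟨S, hS⟩ := hmon
    -- the ideal is nonzero
    have hne : I ≠ ⊥ := by
      intro hbot
      obtain ⟨N, hN⟩ := hhp
      have := hN (N + m) (by omega)
      rw [hbot, hilbert_bot, Polynomial.eval_C] at this
      have : N + m + 1 = m := by exact_mod_cast this
      omega
    obtain ⟨s₀, hs₀⟩ : S.Nonempty := by
      rcases S.eq_empty_or_nonempty with h | h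
      · exfalso; apply hne; rw [hS, h]; simp
      · exact h
    have hE0 : monomial (Finsupp.single (0:Fin 2) (s₀ 0) + Finsupp.single 1 (s₀ 1)) (1:ℂ) ∈ I := by
      rw [← fin2_eq, hS]
      exact Ideal.subset_span (Set.mem_image_of_mem _ hs₀)
    -- upward closure
    have hup : ∀ i j i' j', monomial (Finsupp.single (0:Fin 2) i + Finsupp.single 1 j) (1:ℂ) ∈ I →
        i ≤ i' → j ≤ j' →
        monomial (Finsupp.single (0:Fin 2) i' + Finsupp.single 1 j') (1:ℂ) ∈ I := by
      intro i j i' j' h hi hj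
      have key : monomial (Finsupp.single (0:Fin 2) i' + Finsupp.single 1 j') (1:ℂ) =
          monomial (Finsupp.single (0:Fin 2) (i'-i) + Finsupp.single 1 (j'-j)) (1:ℂ) *
          monomial (Finsupp.single (0:Fin 2) i + Finsupp.single 1 j) (1:ℂ) := by
        rw [monomial_mul, one_mul, pair_add_pair, Nat.sub_add_cancel hi, Nat.sub_add_cancel hj]
      rw [key]
      exact I.mul_mem_left _ h
    -- saturation step
    have hsatE : ∀ i j, monomial (Finsupp.single (0:Fin 2) (i+1) + Finsupp.single 1 j) (1:ℂ) ∈ I →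
        monomial (Finsupp.single (0:Fin 2) i + Finsupp.single 1 (j+1)) (1:ℂ) ∈ I →
        monomial (Finsupp.single (0:Fin 2) i + Finsupp.single 1 j) (1:ℂ) ∈ I := by
      intro i j h1 h2
      apply hsat _ ⟨i + j, isHomogeneous_monomial _ (by rw [deg2, pair0, pair1])⟩
      intro t
      fin_cases t
      · show X (0:Fin 2) * monomial (Finsupp.single (0:Fin 2) i + Finsupp.single 1 j) (1:ℂ) ∈ I
        have hx : X (0:Fin 2) * monomial (Finsupp.single (0:Fin 2) i + Finsupp.single 1 j) (1:ℂ) =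
            monomial (Finsupp.single (0:Fin 2) (i+1) + Finsupp.single 1 j) (1:ℂ) := by
          rw [show (X (0:Fin 2) : MvPolynomial (Fin 2) ℂ) =
              monomial (Finsupp.single 0 1) 1 from rfl, monomial_mul, one_mul, single0_add_pair]
        rw [hx]; exact h1
      · show X (1:Fin 2) * monomial (Finsupp.single (0:Fin 2) i + Finsupp.single 1 j) (1:ℂ) ∈ I
        have hx : X (1:Fin 2) * monomial (Finsupp.single (0:Fin 2) i + Finsupp.single 1 j) (1:ℂ) =
            monomial (Finsupp.single (0:Fin 2) i + Finsupp.single 1 (j+1)) (1:ℂ) := by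
          rw [show (X (1:Fin 2) : MvPolynomial (Fin 2) ℂ) =
              monomial (Finsupp.single 1 1) 1 from rfl, monomial_mul, one_mul, single1_add_pair]
        rw [hx]; exact h2
    -- minimal exponents
    set A : Set ℕ := {i | ∃ j, monomial (Finsupp.single (0:Fin 2) i + Finsupp.single 1 j) (1:ℂ) ∈ I}
      with hA
    set B : Set ℕ := {j | ∃ i, monomial (Finsupp.single (0:Fin 2) i + Finsupp.single 1 j) (1:ℂ) ∈ I}
      with hB
    have hAne : A.Nonempty := ⟨s₀ 0, s₀ 1, hE0⟩
    have hBne : B.Nonempty := ⟨s₀ 1, s₀ 0, hE0⟩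
    set a := sInf A with ha
    set b := sInf B with hb
    obtain ⟨j₀, hj₀⟩ : ∃ j, monomial (Finsupp.single (0:Fin 2) a + Finsupp.single 1 j) (1:ℂ) ∈ I :=
      Nat.sInf_mem hAne
    obtain ⟨i₀, hi₀⟩ : ∃ i, monomial (Finsupp.single (0:Fin 2) i + Finsupp.single 1 b) (1:ℂ) ∈ I :=
      Nat.sInf_mem hBne
    have hamin : ∀ i j, monomial (Finsupp.single (0:Fin 2) i + Finsupp.single 1 j) (1:ℂ) ∈ I →
        a ≤ i := fun i j h => Nat.sInf_le ⟨j, h⟩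
    have hbmin : ∀ i j, monomial (Finsupp.single (0:Fin 2) i + Finsupp.single 1 j) (1:ℂ) ∈ I →
        b ≤ j := fun i j h => Nat.sInf_le ⟨i, h⟩
    -- inner descent in j
    have inner : ∀ (i J : ℕ),
        (∀ j, b ≤ j → monomial (Finsupp.single (0:Fin 2) (i+1) + Finsupp.single 1 j) (1:ℂ) ∈ I) →
        (∀ j, J ≤ j → monomial (Finsupp.single (0:Fin 2) i + Finsupp.single 1 j) (1:ℂ) ∈ I) →
        ∀ j, b ≤ j → monomial (Finsupp.single (0:Fin 2) i + Finsupp.single 1 j) (1:ℂ) ∈ I := by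
      intro i J hrow htail
      have key : ∀ k j, b ≤ j → J ≤ j + k →
          monomial (Finsupp.single (0:Fin 2) i + Finsupp.single 1 j) (1:ℂ) ∈ I := by
        intro k
        induction k with
        | zero => intro j hbj hJ; exact htail j (by omega)
        | succ k ih =>
          intro j hbj hJ
          by_cases hc : J ≤ j + k
          · exact ih j hbj hc
          · exact hsatE i j (hrow j hbj) (ih (j+1) (by omega) (by omega))
      intro j hbj
      exact key J j hbj (by omega)
    -- outer descent in i
    have outer : ∀ k i, a ≤ i → i₀ ≤ i + k → ∀ j, b ≤ j →
        monomial (Finsupp.single (0:Fin 2) i + Finsupp.single 1 j) (1:ℂ) ∈ I := by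
      intro k
      induction k with
      | zero =>
        intro i hai hii j hbj
        exact hup i₀ b i j hi₀ (by omega) hbj
      | succ k ih =>
        intro i hai hii j hbj
        by_cases hc : i₀ ≤ i + k
        · exact ih i hai hc j hbj
        · refine inner i j₀ (fun j' hj' => ih (i+1) (by omega) (by omega) j' hj') ?_ j hbj
          intro j' hj'
          exact hup a j₀ i j' hj₀ hai hj'
    have hEab : monomial (Finsupp.single (0:Fin 2) a + Finsupp.single 1 b) (1:ℂ) ∈ I :=
      outer i₀ a le_rfl (by omega) b le_rfl
    -- I equals the principal ideal
    have hIeq : I = Ideal.span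
        {monomial (Finsupp.single (0 : Fin 2) a + Finsupp.single 1 b) (1 : ℂ)} := by
      apply le_antisymm
      · rw [hS]
        apply Ideal.span_le.mpr
        rintro x ⟨s, hsS, rfl⟩
        have hsE : monomial (Finsupp.single (0:Fin 2) (s 0) + Finsupp.single 1 (s 1)) (1:ℂ) ∈ I := by
          rw [← fin2_eq, hS]
          exact Ideal.subset_span (Set.mem_image_of_mem _ hsS)
        have has : a ≤ s 0 := hamin _ _ hsE
        have hbs : b ≤ s 1 := hbmin _ _ hsE
        apply Ideal.mem_span_singleton.mpr
        refine ⟨monomial (Finsupp.single (0:Fin 2) (s 0 - a) + Finsupp.single 1 (s 1 - b)) 1, ?_⟩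
        rw [monomial_mul, one_mul, pair_add_pair,
          Nat.add_sub_cancel' has, Nat.add_sub_cancel' hbs, ← fin2_eq]
      · apply Ideal.span_le.mpr
        rw [Set.singleton_subset_iff]
        exact hEab
    -- a + b = m
    obtain ⟨N, hN⟩ := hhp
    have hd := hN (max N (a+b)) (le_max_left _ _)
    rw [hIeq, hilbert_principal a b _ (le_max_right _ _), Polynomial.eval_C] at hd
    have : a + b = m := by exact_mod_cast hd
    exact ⟨a, b, this, hIeq⟩
  · rintro ⟨a, b, hab, rfl⟩
    refine ⟨sat_principal a b, a + b, fun d hd => ?_⟩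
    rw [hilbert_principal a b d hd, Polynomial.eval_C, hab]
end

section
/- For every integer m ≥ 0, the number of saturated monomial ideals of ℂ[x_0,x_1] whose Hilbert polynomial is the constant polynomial m is exactly m + 1. -/
open MvPolynomial

attribute [local instance] MvPolynomial.gradedAlgebra

/-!
A monomial ideal `I` is determined by the up-closed set `T ⊆ ℕ²` of exponents of the monomials it
contains, and `h_I(d)` counts the exponents of degree `d` outside `T`. Saturation says that `e ∈ T`
as soon as `e + (1, 0) ∈ T` and `e + (0, 1) ∈ T`. Descending from points of `T` with minimal
first and minimal second coordinate, this forces `T` to be a quadrant `(a, b) + ℕ²`, i.e.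
`I = (x_0^a x_1^b)`, unless `T = ∅` and `h_I(d) = d + 1` is not constant. The ideal
`(x_0^a x_1^b)` has `h_I(d) = a + b` for `d ≥ a + b`, so the ideals in question are the
`(x_0^a x_1^b)` with `a + b = m`.
-/

open Finset

section

variable {n : ℕ}

noncomputable abbrev degreeExps (n d : ℕ) : Finset (Fin n →₀ ℕ) := univ.finsuppAntidiag d

lemma mem_degreeExps {d : ℕ} {e : Fin n →₀ ℕ} : e ∈ degreeExps n d ↔ e.degree = d := by
  simp [Finsupp.degree_eq_sum]

open scoped Classical in
lemma hilbertFn_span_monomial (S : Set (Fin n →₀ ℕ)) (d : ℕ) :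
    hilbertFn n (Ideal.span ((fun a => monomial a (1 : ℂ)) '' S)) d =
      #{e ∈ degreeExps n d | e ∉ upperClosure S} := by
  set F := {e ∈ degreeExps n d | e ∉ upperClosure S}
  have mem_F {e} : e ∈ F ↔ e.degree = d ∧ e ∉ upperClosure S := by
    rw [mem_filter, mem_degreeExps]
  let φ : homogeneousSubmodule (Fin n) ℂ d →ₗ[ℂ] F → ℂ :=
    LinearMap.pi fun e => (lcoeff ℂ e.1).comp (Submodule.subtype _)
  have hker : LinearMap.ker φ = Submodule.comap (Submodule.subtype _)
      (Submodule.restrictScalars ℂ (Ideal.span ((fun a => monomial a (1 : ℂ)) '' S))) := by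
    ext ⟨f, hf⟩
    simp only [LinearMap.mem_ker, Submodule.mem_comap, Submodule.subtype_apply,
      Submodule.restrictScalars_mem, mem_ideal_span_monomial_image, ← mem_upperClosure]
    refine ⟨fun h e he => ?_, fun h => funext fun e => ?_⟩
    · by_contra hT
      have hdeg : e.degree = d := by
        rw [Finsupp.degree_eq_weight_one]
        exact hf (mem_support_iff.1 he)
      exact mem_support_iff.1 he (congrFun h ⟨e, mem_F.2 ⟨hdeg, hT⟩⟩)
    · by_contra hc
      exact (mem_F.1 e.2).2 (h e.1 (mem_support_iff.2 hc))
  have hsurj : Function.Surjective φ := by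
    intro g
    refine ⟨⟨∑ e : F, monomial e.1 (g e), Submodule.sum_mem _ fun e _ =>
      isHomogeneous_monomial _ (mem_F.1 e.2).1⟩, funext fun e => ?_⟩
    change coeff e.1 (∑ e' : F, monomial e'.1 (g e')) = g e
    rw [coeff_sum, sum_eq_single e
      (fun e' _ he' => by rw [coeff_monomial, if_neg (Subtype.coe_ne_coe.2 he')])
      (fun h => (h (mem_univ e)).elim), coeff_monomial, if_pos rfl]
  rw [hilbertFn, ← hker, (φ.quotKerEquivOfSurjective hsurj).finrank_eq,
    Module.finrank_fintype_fun_eq_card, Fintype.card_coe]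

lemma monomial_mem_span_monomial_iff {S : Set (Fin n →₀ ℕ)} {e : Fin n →₀ ℕ} :
    monomial e (1 : ℂ) ∈ Ideal.span ((fun a => monomial a (1 : ℂ)) '' S) ↔ e ∈ upperClosure S := by
  simp [mem_ideal_span_monomial_image, support_monomial, mem_upperClosure]

lemma isSaturatedIdeal_span_monomial_iff (S : Set (Fin n →₀ ℕ)) :
    IsSaturatedIdeal (Ideal.span ((fun a => monomial a (1 : ℂ)) '' S)) ↔
      ∀ e, (∀ i, Finsupp.single i 1 + e ∈ upperClosure S) → e ∈ upperClosure S := by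
  have X_mul_monomial (i : Fin n) (e : Fin n →₀ ℕ) :
      X i * monomial e (1 : ℂ) = monomial (Finsupp.single i 1 + e) 1 := by
    rw [X, monomial_mul, one_mul]
  constructor
  · intro hsat e he
    refine monomial_mem_span_monomial_iff.1 <| hsat _ ⟨_, isHomogeneous_monomial _ rfl⟩ fun i => ?_
    rw [X_mul_monomial, monomial_mem_span_monomial_iff]
    exact he i
  · intro hsat f _ hX
    rw [mem_ideal_span_monomial_image]
    refine fun e he => mem_upperClosure.1 <| hsat e fun i => ?_
    exact mem_upperClosure.2 <| mem_ideal_span_monomial_image.1 (hX i) (Finsupp.single i 1 + e)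
      (by rwa [mem_support_iff, coeff_X_mul, ← mem_support_iff])

lemma span_monomial_upperClosure (S : Set (Fin n →₀ ℕ)) :
    Ideal.span ((fun a => monomial a (1 : ℂ)) '' (upperClosure S : Set (Fin n →₀ ℕ))) =
      Ideal.span ((fun a => monomial a (1 : ℂ)) '' S) := by
  ext f
  simp only [mem_ideal_span_monomial_image, ← mem_upperClosure, SetLike.mem_coe]
  exact forall₂_congr fun e _ =>
    ⟨fun ⟨a, ha, hae⟩ => (upperClosure S).upper hae ha, fun he => ⟨e, he, le_rfl⟩⟩

lemma span_monomial_injective :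
    Function.Injective fun c : Fin n →₀ ℕ => Ideal.span {monomial c (1 : ℂ)} := by
  intro c c' h
  have hdvd {c c' : Fin n →₀ ℕ}
      (h : Ideal.span {monomial c (1 : ℂ)} ≤ Ideal.span {monomial c' 1}) : c' ≤ c := by
    simpa using monomial_dvd_monomial.1 (Ideal.span_singleton_le_span_singleton.1 h)
  exact le_antisymm (hdvd h.ge) (hdvd h.le)

lemma card_filter_le_degreeExps (c : Fin n →₀ ℕ) {d : ℕ} (hd : c.degree ≤ d) :
    #{e ∈ degreeExps n d | c ≤ e} = #(degreeExps n (d - c.degree)) := by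
  refine card_nbij' (· - c) (c + ·) (fun e he => ?_) (fun e he => ?_) (fun e he => ?_)
    (fun e _ => add_tsub_cancel_left c e)
  · obtain ⟨he, hce⟩ := mem_filter.1 he
    rw [mem_coe, mem_degreeExps, ← mem_degreeExps.1 he, ← add_tsub_cancel_of_le hce, map_add]
    simp
  · rw [mem_coe, mem_degreeExps] at he
    rw [mem_coe, mem_filter, mem_degreeExps, map_add, he]
    exact ⟨by omega, le_self_add⟩
  · exact add_tsub_cancel_of_le (mem_filter.1 he).2

end

lemma le_iff_fin_two {e f : Fin 2 →₀ ℕ} : e ≤ f ↔ e 0 ≤ f 0 ∧ e 1 ≤ f 1 := by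
  simp [Finsupp.le_def, Fin.forall_fin_two]

lemma card_degreeExps_two (d : ℕ) : #(degreeExps 2 d) = d + 1 := by
  simp [card_finsuppAntidiag_nat_eq_choose, add_comm]

lemma card_filter_not_le_degreeExps_two (c : Fin 2 →₀ ℕ) {d : ℕ} (hd : c.degree ≤ d) :
    #{e ∈ degreeExps 2 d | ¬ c ≤ e} = c.degree := by
  have := card_filter_add_card_filter_not (s := degreeExps 2 d) (c ≤ ·)
  rw [card_filter_le_degreeExps c hd, card_degreeExps_two, card_degreeExps_two] at this
  omega

lemma hilbertFn_span_monomial_two (c : Fin 2 →₀ ℕ) {d : ℕ} (hd : c.degree ≤ d) :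
    hilbertFn 2 (Ideal.span {monomial c (1 : ℂ)}) d = c.degree := by
  rw [← Set.image_singleton (f := fun a => monomial a (1 : ℂ)), hilbertFn_span_monomial]
  convert card_filter_not_le_degreeExps_two c hd using 4
  simp

theorem IsUpperSet.eq_Ici_of_saturated_two {T : Set (Fin 2 →₀ ℕ)} (hT : IsUpperSet T)
    (hne : T.Nonempty) (hsat : ∀ e, (∀ i, Finsupp.single i 1 + e ∈ T) → e ∈ T) :
    ∃ c, T = Set.Ici c := by
  set u := Function.argminOn (· 0) T hne
  set v := Function.argminOn (· 1) T hne
  have hu : u ∈ T := Function.argminOn_mem _ T hne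
  have hv : v ∈ T := Function.argminOn_mem _ T hne
  have key (k : ℕ) : ∀ e : Fin 2 →₀ ℕ, (v 0 - e 0) + (u 1 - e 1) = k →
      u 0 ≤ e 0 → v 1 ≤ e 1 → e ∈ T := by
    induction k using Nat.strong_induction_on with
    | _ k ih =>
      intro e hk he0 he1
      by_cases hv0 : v 0 ≤ e 0
      · exact hT (le_iff_fin_two.2 ⟨hv0, he1⟩) hv
      by_cases hu1 : u 1 ≤ e 1
      · exact hT (le_iff_fin_two.2 ⟨he0, hu1⟩) hu
      refine hsat e fun i => ?_
      fin_cases i <;> refine ih _ ?_ _ rfl ?_ ?_ <;> simp <;> omega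
  refine ⟨Finsupp.single 0 (u 0) + Finsupp.single 1 (v 1),
    Set.ext fun e => ⟨fun he => ?_, fun he => ?_⟩⟩
  · simpa [le_iff_fin_two] using
      ⟨Function.argminOn_le (· 0) T he, Function.argminOn_le (· 1) T he⟩
  · simp [le_iff_fin_two] at he
    exact key _ e rfl he.1 he.2

lemma isSaturatedIdeal_span_monomial_two (c : Fin 2 →₀ ℕ) :
    IsSaturatedIdeal (Ideal.span {monomial c (1 : ℂ)}) := by
  rw [← Set.image_singleton (f := fun a => monomial a (1 : ℂ)), isSaturatedIdeal_span_monomial_iff]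
  intro e he
  simp [Fin.forall_fin_two, le_iff_fin_two] at he ⊢
  omega

lemma hasHilbertPoly_span_monomial_two (c : Fin 2 →₀ ℕ) :
    HasHilbertPoly (Ideal.span {monomial c (1 : ℂ)}) (Polynomial.C (c.degree : ℚ)) :=
  ⟨c.degree, fun d hd => by rw [hilbertFn_span_monomial_two c hd, Polynomial.eval_C]⟩

lemma exists_eq_span_monomial_two {I : Ideal (MvPolynomial (Fin 2) ℂ)} {m : ℕ}
    (hmon : IsMonomialIdeal I) (hsat : IsSaturatedIdeal I)
    (hI : HasHilbertPoly I (Polynomial.C (m : ℚ))) :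
    ∃ c : Fin 2 →₀ ℕ, c.degree = m ∧ I = Ideal.span {monomial c 1} := by
  obtain ⟨S, rfl⟩ := hmon
  obtain ⟨N, hN⟩ := hI
  have hilb {d} (hd : N ≤ d) :
      hilbertFn 2 (Ideal.span ((fun a => monomial a (1 : ℂ)) '' S)) d = m := by
    exact_mod_cast (hN d hd).trans Polynomial.eval_C
  have hne : (upperClosure S : Set (Fin 2 →₀ ℕ)).Nonempty := by
    classical
    by_contra hT
    have := hilb (d := N + m) (by omega)
    rw [hilbertFn_span_monomial, filter_true_of_mem (p := (· ∉ upperClosure S))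
      fun e _ he => hT ⟨e, he⟩, card_degreeExps_two] at this
    omega
  obtain ⟨c, hc⟩ := (upperClosure S).upper.eq_Ici_of_saturated_two hne
    ((isSaturatedIdeal_span_monomial_iff S).1 hsat)
  have hspan : Ideal.span ((fun a => monomial a (1 : ℂ)) '' S) = Ideal.span {monomial c 1} := by
    rw [← span_monomial_upperClosure S, hc,
      ← Set.image_singleton (f := fun a => monomial a (1 : ℂ)), ← span_monomial_upperClosure {c}, upperClosure_singleton, UpperSet.coe_Ici]
  refine ⟨c, ?_, hspan⟩
  have := hilb (le_max_left N c.degree)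
  rwa [hspan, hilbertFn_span_monomial_two c (le_max_right _ _)] at this

/-- The number of saturated monomial ideals of `ℂ[x_0,x_1]` with Hilbert
polynomial the constant polynomial `m` is exactly `m + 1`. -/
theorem statement3 (m : ℕ) :
    {I : Ideal (MvPolynomial (Fin 2) ℂ) |
        IsMonomialIdeal I ∧ IsSaturatedIdeal I ∧ HasHilbertPoly I (Polynomial.C (m : ℚ))}.ncard
      = m + 1 := by
  have hset : {I : Ideal (MvPolynomial (Fin 2) ℂ) |
        IsMonomialIdeal I ∧ IsSaturatedIdeal I ∧ HasHilbertPoly I (Polynomial.C (m : ℚ))} =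
      (fun c => Ideal.span {monomial c (1 : ℂ)}) '' (degreeExps 2 m : Set (Fin 2 →₀ ℕ)) := by
    ext I
    constructor
    · rintro ⟨hmon, hsat, hI⟩
      obtain ⟨c, hc, rfl⟩ := exists_eq_span_monomial_two hmon hsat hI
      exact ⟨c, mem_degreeExps.2 hc, rfl⟩
    · rintro ⟨c, hc, rfl⟩
      rw [mem_coe, mem_degreeExps] at hc
      refine ⟨⟨{c}, by rw [Set.image_singleton]⟩, isSaturatedIdeal_span_monomial_two c, ?_⟩
      exact hc ▸ hasHilbertPoly_span_monomial_two c
  rw [hset, Set.ncard_image_of_injective _ span_monomial_injective, Set.ncard_coe_finset,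
    card_degreeExps_two]
end

section
/- Let I be a nonzero saturated monomial ideal of ℂ[x_0,x_1,x_2]. Then the set {a ∈ ℤ_{≥0}^3 : x^a ∉ I} of exponent vectors of monomials not in I is a finite (possibly empty) union of rays and quadrants. -/
open MvPolynomial

attribute [local instance] MvPolynomial.gradedAlgebra

/-!
The exponents of the monomials outside `I` form a proper lower set `C ⊆ ℕ³`, and saturation says
that every `a ∈ C` has a neighbour `a + eᵢ` in `C`. Some whole ray `a + ℕ eᵢ` then lies in `C`:
otherwise the points of `C` above `a` lie in a finite box, and a maximal one among them has no
neighbour in `C`. By Dickson's lemma the complement of `C` is generated by finitely many minimal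
points, all below some `b`; every coordinate in which `a` exceeds `b` can then be freed as well
without reaching these generators. So each `a ∈ C` lies in an orthant inside `C` whose fixed
coordinates are bounded by `b`, and there are only finitely many such orthants.
-/

open Finset Finsupp

lemma exists_bounded_minorants {α : Type*} [PartialOrder α] [WellQuasiOrderedLE α]
    [IsDirectedOrder α] [Nonempty α] (s : Set α) :
    ∃ b, ∀ x ∈ s, ∃ m ∈ s, m ≤ x ∧ m ≤ b := by
  have hpwo := Set.isPWO_of_wellQuasiOrderedLE s
  have hfin : {x | Minimal (· ∈ s) x}.Finite :=
    (setOfPred_minimal_antichain _).finite_of_partiallyWellOrderedOn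
      (hpwo.mono (setOfPred_minimal_subset s))
  obtain ⟨b, hb⟩ := hfin.bddAbove
  refine ⟨b, fun x hx => ?_⟩
  obtain ⟨m, hmx, hm⟩ := hpwo.exists_le_minimal hx
  exact ⟨m, hm.prop, hmx, hb hm⟩

section Orthants

variable {ι : Type*}

def orthant (S : Finset ι) (c : ι → ℕ) : Set (ι →₀ ℕ) :=
  {x | ∀ i ∈ S, x i = c i}

lemma orthant_congr {S : Finset ι} {c c' : ι → ℕ} (h : ∀ i ∈ S, c i = c' i) :
    orthant S c = orthant S c' :=
  Set.ext fun x => forall₂_congr fun i hi => by rw [h i hi]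

lemma orthant_empty (c : ι → ℕ) : orthant ∅ c = Set.univ := by
  simp [orthant]

lemma isOrthant_orthant {m : ℕ} (S : Finset (Fin m)) (c : Fin m → ℕ) :
    IsOrthant m (m - S.card) (orthant S c) :=
  ⟨S, c, by have := card_le_univ S; rw [Fintype.card_fin] at this; omega, rfl⟩

variable {C : Set (ι →₀ ℕ)}

lemma exists_ray_subset [Finite ι] (hC : IsLowerSet C)
    (hstep : ∀ x ∈ C, ∃ i, x + single i 1 ∈ C) {a : ι →₀ ℕ} (ha : a ∈ C) :
    ∃ i, ∀ s, a + single i s ∈ C := by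
  classical
  by_contra! h
  choose s hs using h
  let T := {x ∈ C | a ≤ x}
  have hT : T ⊆ Set.Iic (a + equivFunOnFinite.symm s) := by
    rintro x ⟨hxC, hax⟩ i
    by_contra! hlt
    refine hs i (hC (fun l => ?_) hxC)
    by_cases hl : l = i
    · subst hl; simpa using hlt.le
    · simpa [single_apply, Ne.symm hl] using hax l
  obtain ⟨x, ⟨hxC, hax⟩, hmax⟩ :=
    ((Set.finite_Iic _).subset hT).exists_maximal ⟨a, ha, le_rfl⟩
  obtain ⟨i, hi⟩ := hstep x hxC
  have := hmax ⟨hi, hax.trans le_self_add⟩ le_self_add i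
  simp at this

lemma orthant_erase_subset [Fintype ι] [DecidableEq ι] (hC : IsLowerSet C) {a : ι →₀ ℕ}
    {i : ι} (hray : ∀ s, a + single i s ∈ C) : orthant (univ.erase i) a ⊆ C := by
  intro x hx
  refine hC (fun l => ?_) (hray (x i))
  by_cases hl : l = i
  · subst hl; simp
  · simp [Ne.symm hl, hx l (mem_erase.2 ⟨hl, mem_univ l⟩)]

lemma orthant_filter_subset (hC : IsLowerSet C) {b : ι →₀ ℕ}
    (hb : ∀ x ∉ C, ∃ m ∉ C, m ≤ x ∧ m ≤ b) {S : Finset ι} {a : ι →₀ ℕ}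
    (hS : orthant S a ⊆ C) : orthant {i ∈ S | a i ≤ b i} a ⊆ C := by
  classical
  intro x hx
  by_contra hxC
  obtain ⟨m, hmC, hmx, hmb⟩ := hb x hxC
  refine hmC (hC (?_ : m ≤ a + m.filter (· ∉ S)) (hS fun i hi => by simp [hi]))
  intro i
  by_cases hi : i ∈ S
  · by_cases hab : a i ≤ b i
    · simpa [hi, hx i (mem_filter.2 ⟨hi, hab⟩)] using hmx i
    · simpa [hi] using (hmb i).trans (not_le.1 hab).le
  · simp [hi]

end Orthants

theorem exists_finset_orthant_cover {n : ℕ} {C : Set (Fin n →₀ ℕ)} (hC : IsLowerSet C)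
    (hstep : ∀ x ∈ C, ∃ i, x + single i 1 ∈ C) (hproper : ∃ g, g ∉ C) :
    ∃ 𝒞 : Finset (Set (Fin n →₀ ℕ)),
      (∀ K ∈ 𝒞, ∃ k, 0 < k ∧ k < n ∧ IsOrthant n k K) ∧ C = ⋃₀ (𝒞 : Set (Set (Fin n →₀ ℕ))) := by
  classical
  obtain ⟨b, hb⟩ := exists_bounded_minorants Cᶜ
  let K : Finset (Fin n) × (Fin n →₀ ℕ) → Set (Fin n →₀ ℕ) := fun p => orthant p.1 p.2
  refine ⟨{p ∈ (univ : Finset (Finset (Fin n))) ×ˢ Iic b | p.1.card < n ∧ K p ⊆ C}.image K,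
    ?_, ?_⟩
  · simp only [mem_image, mem_filter]
    rintro _ ⟨⟨S, c⟩, ⟨-, hSn : S.card < n, hSC⟩, rfl⟩
    have hS : S.Nonempty := by
      rw [nonempty_iff_ne_empty]
      rintro rfl
      obtain ⟨g, hg⟩ := hproper
      exact hg (hSC (by simp [K, orthant_empty]))
    exact ⟨n - S.card, by omega, by have := hS.card_pos; omega, isOrthant_orthant S c⟩
  refine Set.Subset.antisymm (fun a ha => ?_) (Set.sUnion_subset ?_)
  · obtain ⟨i, hi⟩ := exists_ray_subset hC hstep ha
    let S := {l ∈ univ.erase i | a l ≤ b l}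
    have hK : K (S, a ⊓ b) = orthant S a :=
      orthant_congr fun l hl => inf_eq_left.2 (mem_filter.1 hl).2
    have hSn : S.card < n := calc
      S.card ≤ (univ.erase i).card := card_filter_le _ _
      _ < n := by simpa using i.pos
    refine ⟨orthant S a, mem_image.2 ⟨(S, a ⊓ b), mem_filter.2 ⟨?_, hSn, ?_⟩, hK⟩, fun l _ => rfl⟩
    · exact mem_product.2 ⟨mem_univ _, mem_Iic.2 inf_le_right⟩
    · exact hK ▸ orthant_filter_subset hC hb (orthant_erase_subset hC hi)
  · simp only [coe_image, coe_filter, Set.forall_mem_image]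
    exact fun p hp => hp.2.2

lemma isLowerSet_setOf_monomial_notMem {σ R : Type*} [CommSemiring R]
    (I : Ideal (MvPolynomial σ R)) : IsLowerSet {a : σ →₀ ℕ | monomial a (1 : R) ∉ I} := by
  intro a b hba ha hb
  refine ha ?_
  rw [← tsub_add_cancel_of_le hba, ← one_mul (1 : R), ← monomial_mul]
  exact I.mul_mem_left _ hb

lemma IsSaturatedIdeal.exists_monomial_add_single_notMem {n : ℕ}
    {I : Ideal (MvPolynomial (Fin n) ℂ)} (hsat : IsSaturatedIdeal I) {a : Fin n →₀ ℕ}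
    (ha : monomial a (1 : ℂ) ∉ I) : ∃ i, monomial (a + single i 1) (1 : ℂ) ∉ I := by
  by_contra! h
  refine ha (hsat _ ⟨_, isHomogeneous_monomial 1 rfl⟩ fun i => ?_)
  rw [X, monomial_mul, one_mul, add_comm]
  exact h i

lemma IsMonomialIdeal.exists_monomial_mem {n : ℕ} {I : Ideal (MvPolynomial (Fin n) ℂ)}
    (hmon : IsMonomialIdeal I) (hne : I ≠ ⊥) : ∃ a, monomial a (1 : ℂ) ∈ I := by
  obtain ⟨S, rfl⟩ := hmon
  obtain ⟨a, ha⟩ : S.Nonempty := Set.nonempty_iff_ne_empty.2 (by rintro rfl; simp at hne)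
  exact ⟨a, Ideal.subset_span ⟨a, ha, rfl⟩⟩

/-- For a nonzero saturated monomial ideal `I ⊆ ℂ[x_0,x_1,x_2]`, the set of
exponent vectors of monomials not in `I` is a finite union of rays and quadrants. -/
theorem statement4 (I : Ideal (MvPolynomial (Fin 3) ℂ)) (hmon : IsMonomialIdeal I)
    (hsat : IsSaturatedIdeal I) (hne : I ≠ ⊥) :
    ∃ 𝒞 : Finset (Set (Fin 3 →₀ ℕ)),
      (∀ K ∈ 𝒞, IsOrthant 3 1 K ∨ IsOrthant 3 2 K) ∧
      {a : Fin 3 →₀ ℕ | monomial a (1 : ℂ) ∉ I} = ⋃₀ (𝒞 : Set (Set (Fin 3 →₀ ℕ))) := by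
  obtain ⟨g, hg⟩ := hmon.exists_monomial_mem hne
  obtain ⟨𝒞, h𝒞, hcover⟩ := exists_finset_orthant_cover (isLowerSet_setOf_monomial_notMem I)
    (fun a ha => hsat.exists_monomial_add_single_notMem ha) ⟨g, not_not.2 hg⟩
  refine ⟨𝒞, fun K hK => ?_, hcover⟩
  obtain ⟨k, hk0, hk3, hK⟩ := h𝒞 K hK
  interval_cases k
  exacts [Or.inl hK, Or.inr hK]
end
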